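/- arXiv:1811.09929 — 4 statements merged into one kernel-verified Lean document; each statement's English description precedes it below -/
import Mathlib

section
/- Let G(f, a) = f²|a|² + ½(1 - f²)² for (f, a) ∈ ℝ × ℝ³. Then for all f, g ∈ ℝ and a, b ∈ ℝ³, the second derivative of t ↦ G(f + tg, a + tb) at t = 0 equals 2|f b + 2g a|² + 6 g² (f² - |a|² - 1/3). -/
/-!
Along the line `t ↦ (f + t g, a + t b)` the term `‖a + t • b‖²` is the quadratic
`‖a‖² + 2t⟪a, b⟫ + t²‖b‖²`, so `G` restricts to a real polynomial of degree four in `t`, whose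
second derivative is the formal one. Both sides of the identity are then polynomials in
`f, g, ‖a‖², ⟪a, b⟫, ‖b‖²`.
-/

open scoped RealInnerProductSpace
open Polynomial

section InnerProduct

variable {E : Type*} [NormedAddCommGroup E] [InnerProductSpace ℝ E]

lemma norm_add_smul_sq (a b : E) (t : ℝ) :
    ‖a + t • b‖ ^ 2 = ‖a‖ ^ 2 + 2 * t * ⟪a, b⟫ + t ^ 2 * ‖b‖ ^ 2 := by
  rw [norm_add_sq_real, real_inner_smul_right, norm_smul, mul_pow, Real.norm_eq_abs, sq_abs]
  ring

lemma norm_smul_add_smul_sq (x y : ℝ) (a b : E) :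
    ‖x • a + y • b‖ ^ 2 = x ^ 2 * ‖a‖ ^ 2 + 2 * x * y * ⟪a, b⟫ + y ^ 2 * ‖b‖ ^ 2 := by
  rw [norm_add_sq_real, real_inner_smul_left, real_inner_smul_right, norm_smul, norm_smul,
    mul_pow, mul_pow, Real.norm_eq_abs, Real.norm_eq_abs, sq_abs, sq_abs]
  ring

end InnerProduct

lemma deriv_deriv_polynomial_eval {𝕜 : Type*} [NontriviallyNormedField 𝕜] (p : 𝕜[X]) :
    deriv (deriv fun x => p.eval x) = fun x => (derivative (derivative p)).eval x := by
  have deriv_eval (q : 𝕜[X]) : deriv (fun x => q.eval x) = fun x => q.derivative.eval x :=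
    funext fun _ => Polynomial.deriv q
  rw [deriv_eval, deriv_eval]

lemma deriv_deriv_energy_along_line_zero (f g α β γ : ℝ) :
    deriv (deriv fun t : ℝ =>
        (f + t * g) ^ 2 * (α + 2 * t * β + t ^ 2 * γ) + 1 / 2 * (1 - (f + t * g) ^ 2) ^ 2) 0
      = 2 * (f ^ 2 * γ + 4 * f * g * β + 4 * g ^ 2 * α) + 6 * g ^ 2 * (f ^ 2 - α - 1 / 3) := by
  have eq_eval : (fun t : ℝ =>
        (f + t * g) ^ 2 * (α + 2 * t * β + t ^ 2 * γ) + 1 / 2 * (1 - (f + t * g) ^ 2) ^ 2)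
      = fun t => ((C f + X * C g) ^ 2 * (C α + 2 * X * C β + X ^ 2 * C γ)
          + C (1 / 2) * (1 - (C f + X * C g) ^ 2) ^ 2).eval t := by
    ext t
    simp only [eval_add, eval_sub, eval_mul, eval_pow, eval_C, eval_X, eval_one, eval_ofNat]
  rw [eq_eval, deriv_deriv_polynomial_eval]
  simp only [derivative_add, derivative_sub, derivative_mul, derivative_pow, derivative_C,
    derivative_X, derivative_one, derivative_ofNat, derivative_zero, eval_add, eval_sub, eval_mul,
    eval_pow, eval_C, eval_X, eval_one, eval_ofNat, eval_zero]
  ring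

/-- Second variation identity for `G(f,a) = f²|a|² + ½(1-f²)²`:
`(d²/dt²)|_{t=0} G(f+tg, a+tb) = 2|fb+2ga|² + 6g²(f² - |a|² - 1/3)`. -/
theorem stmt6 (f g : ℝ) (a b : EuclideanSpace ℝ (Fin 3)) :
    deriv (deriv (fun t : ℝ =>
        (f + t*g)^2 * ‖a + t • b‖^2 + (1/2) * (1 - (f + t*g)^2)^2)) 0
      = 2 * ‖f • b + (2*g) • a‖^2 + 6 * g^2 * (f^2 - ‖a‖^2 - 1/3) := by
  simp_rw [norm_add_smul_sq a b]
  rw [deriv_deriv_energy_along_line_zero, norm_smul_add_smul_sq, real_inner_comm]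
  ring
end

section
/- The function G(f, a) = f²|a|² + ½(1 - f²)² is convex on the convex set S = {(f, a) ∈ ℝ × ℝ³ : f > 0, f² - |a|² ≥ 1/3}. -/
private lemma mid (t s f₁ f₂ u v : ℝ) (ht : 0 ≤ t) (hs : 0 ≤ s) (hts : t + s = 1)
    (hu : 0 ≤ u) (hv : 0 ≤ v) (hf₁ : 0 < f₁) (hf₂ : 0 < f₂)
    (h₁ : 1/3 ≤ f₁^2 - u^2) (h₂ : 1/3 ≤ f₂^2 - v^2) :
    u*v + 1/3 ≤ f₁*f₂ := by
  nlinarith [sq_nonneg (u-v), sq_nonneg (f₁-f₂), mul_pos hf₁ hf₂, sq_nonneg (u*v),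
    mul_nonneg hu hv, sq_nonneg (f₁*f₂ - u*v - 1/3)]

set_option maxHeartbeats 1000000 in
private lemma key2D (t s f₁ f₂ u v : ℝ) (ht : 0 ≤ t) (hs : 0 ≤ s) (hts : t + s = 1)
    (hu : 0 ≤ u) (hv : 0 ≤ v) (hf₁ : 0 < f₁) (hf₂ : 0 < f₂)
    (h₁ : 1/3 ≤ f₁^2 - u^2) (h₂ : 1/3 ≤ f₂^2 - v^2) :
    (t*f₁+s*f₂)^2*(t*u+s*v)^2 + 1/2*(1-(t*f₁+s*f₂)^2)^2
      ≤ t*(f₁^2*u^2 + 1/2*(1-f₁^2)^2) + s*(f₂^2*v^2 + 1/2*(1-f₂^2)^2) := by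
  have hM : 0 ≤ f₁*f₂ - u*v - 1/3 := by
    have := mid t s f₁ f₂ u v ht hs hts hu hv hf₁ hf₂ h₁ h₂; linarith
  have hs' : s = 1 - t := by linarith
  subst hs'
  have ht1 : t ≤ 1 := by linarith
  set g := f₁ - f₂
  set h := u - v
  set P0 := f₂*h + 2*g*v
  set P1 := f₁*h + 2*g*u
  set C0 := f₂^2 - v^2 - 1/3
  set C1 := f₁^2 - u^2 - 1/3
  set M := f₁*f₂ - u*v - 1/3
  set A := (3-3*t+t^2)*P0 + (1+t-t^2)*P1 with hA
  have hq : (0:ℝ) < 3-3*t+t^2 := by nlinarith [sq_nonneg (t-1)]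
  have hq2 : (0:ℝ) ≤ 1+t-t^2 := by nlinarith [mul_nonneg ht (by linarith : (0:ℝ) ≤ 1-t)]
  have hq3 : (0:ℝ) ≤ 1+t+t^2 := by nlinarith [sq_nonneg t]
  have hq4 : (0:ℝ) ≤ 1-t+t^2 := by nlinarith [sq_nonneg t, sq_nonneg (1-t)]
  have hC0 : (0:ℝ) ≤ C0 := by simp only [C0]; linarith
  have hC1 : (0:ℝ) ≤ C1 := by simp only [C1]; linarith
  have hMnn : (0:ℝ) ≤ M := hM
  have hbr : 0 ≤ t*(1-t)*(2*A^2 + 4*(1-t+t^2)*P1^2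
      + 6*g^2*(3-3*t+t^2)*((3-3*t+t^2)*C0 + 2*(1+t-t^2)*M + (1+t+t^2)*C1)) := by
    have h1' : (0:ℝ) ≤ t*(1-t) := mul_nonneg ht (by linarith)
    have h2' : (0:ℝ) ≤ 2*A^2 + 4*(1-t+t^2)*P1^2
        + 6*g^2*(3-3*t+t^2)*((3-3*t+t^2)*C0 + 2*(1+t-t^2)*M + (1+t+t^2)*C1) := by
      have i1 : (0:ℝ) ≤ 2*A^2 := by positivity
      have i2 : (0:ℝ) ≤ 4*(1-t+t^2)*P1^2 := by
        apply mul_nonneg (by linarith) (sq_nonneg _)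
      have i3 : (0:ℝ) ≤ (3-3*t+t^2)*C0 + 2*(1+t-t^2)*M + (1+t+t^2)*C1 := by
        have := mul_nonneg hq.le hC0
        have := mul_nonneg hq2 hMnn
        have := mul_nonneg hq3 hC1
        linarith
      have i4 : (0:ℝ) ≤ 6*g^2*(3-3*t+t^2) := by positivity
      nlinarith [mul_nonneg i4 i3]
    exact mul_nonneg h1' h2'
  have hid : 12*(3-3*t+t^2)*((t*(f₁^2*u^2 + 1/2*(1-f₁^2)^2)
        + (1-t)*(f₂^2*v^2 + 1/2*(1-f₂^2)^2))
        - ((t*f₁+(1-t)*f₂)^2*(t*u+(1-t)*v)^2 + 1/2*(1-(t*f₁+(1-t)*f₂)^2)^2))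
      = t*(1-t)*(2*A^2 + 4*(1-t+t^2)*P1^2
        + 6*g^2*(3-3*t+t^2)*((3-3*t+t^2)*C0 + 2*(1+t-t^2)*M + (1+t+t^2)*C1)) := by
    simp only [A, P0, P1, C0, C1, M, g, h]; ring
  have h0 := hid ▸ hbr
  have h12q : (0:ℝ) < 12*(3-3*t+t^2) := by linarith
  have := (mul_nonneg_iff_of_pos_left h12q).mp (by linarith [h0] :
    0 ≤ 12*(3-3*t+t^2) * ((t*(f₁^2*u^2 + 1/2*(1-f₁^2)^2)
        + (1-t)*(f₂^2*v^2 + 1/2*(1-f₂^2)^2))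
        - ((t*f₁+(1-t)*f₂)^2*(t*u+(1-t)*v)^2 + 1/2*(1-(t*f₁+(1-t)*f₂)^2)^2)))
  linarith

/-- `G(f,a) = f²|a|² + ½(1-f²)²` is convex on
`S = {(f,a) : f > 0, f² - |a|² ≥ 1/3}`. -/
theorem stmt8 :
    ConvexOn ℝ {p : ℝ × EuclideanSpace ℝ (Fin 3) | 0 < p.1 ∧ 1/3 ≤ p.1^2 - ‖p.2‖^2}
      (fun p : ℝ × EuclideanSpace ℝ (Fin 3) =>
        p.1^2 * ‖p.2‖^2 + (1/2) * (1 - p.1^2)^2) := by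
  constructor
  · intro x hx y hy t s ht hs hts
    obtain ⟨hx1, hx2⟩ := hx
    obtain ⟨hy1, hy2⟩ := hy
    have hnorm : ‖t • x.2 + s • y.2‖ ≤ t*‖x.2‖ + s*‖y.2‖ := by
      calc ‖t • x.2 + s • y.2‖ ≤ ‖t • x.2‖ + ‖s • y.2‖ := norm_add_le _ _
        _ = t*‖x.2‖ + s*‖y.2‖ := by
          rw [norm_smul, norm_smul, Real.norm_eq_abs, Real.norm_eq_abs,
            abs_of_nonneg ht, abs_of_nonneg hs]
    have hM := mid t s x.1 y.1 ‖x.2‖ ‖y.2‖ ht hs hts (norm_nonneg _) (norm_nonneg _)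
      hx1 hy1 hx2 hy2
    have hfst : (t • x + s • y).1 = t*x.1 + s*y.1 := rfl
    have hsnd : (t • x + s • y).2 = t • x.2 + s • y.2 := rfl
    constructor
    · show 0 < (t • x + s • y).1
      rw [hfst]
      rcases ht.lt_or_eq with h | h
      · nlinarith [mul_nonneg hs hy1.le]
      · have : s = 1 := by linarith
        simp [← h, this, hy1]
    · show 1/3 ≤ ((t • x + s • y).1)^2 - ‖(t • x + s • y).2‖^2
      rw [hfst, hsnd]
      have hsq : ‖t • x.2 + s • y.2‖^2 ≤ (t*‖x.2‖ + s*‖y.2‖)^2 := by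
        apply pow_le_pow_left₀ (norm_nonneg _) hnorm
      nlinarith [sq_nonneg t, sq_nonneg s, mul_nonneg ht hs]
  · intro x hx y hy t s ht hs hts
    obtain ⟨hx1, hx2⟩ := hx
    obtain ⟨hy1, hy2⟩ := hy
    simp only
    have hfst : (t • x + s • y).1 = t*x.1 + s*y.1 := rfl
    have hsnd : (t • x + s • y).2 = t • x.2 + s • y.2 := rfl
    rw [hfst, hsnd]
    have hnorm : ‖t • x.2 + s • y.2‖ ≤ t*‖x.2‖ + s*‖y.2‖ := by
      calc ‖t • x.2 + s • y.2‖ ≤ ‖t • x.2‖ + ‖s • y.2‖ := norm_add_le _ _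
        _ = t*‖x.2‖ + s*‖y.2‖ := by
          rw [norm_smul, norm_smul, Real.norm_eq_abs, Real.norm_eq_abs,
            abs_of_nonneg ht, abs_of_nonneg hs]
    have hsq : ‖t • x.2 + s • y.2‖^2 ≤ (t*‖x.2‖ + s*‖y.2‖)^2 :=
      pow_le_pow_left₀ (norm_nonneg _) hnorm 2
    have hkey := key2D t s x.1 y.1 ‖x.2‖ ‖y.2‖ ht hs hts (norm_nonneg _) (norm_nonneg _)
      hx1 hy1 hx2 hy2
    have hmono : (t*x.1 + s*y.1)^2 * ‖t • x.2 + s • y.2‖^2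
        ≤ (t*x.1 + s*y.1)^2 * (t*‖x.2‖ + s*‖y.2‖)^2 :=
      mul_le_mul_of_nonneg_left hsq (sq_nonneg _)
    calc (t*x.1 + s*y.1)^2 * ‖t • x.2 + s • y.2‖^2 + 1/2*(1-(t*x.1+s*y.1)^2)^2
        ≤ (t*x.1 + s*y.1)^2 * (t*‖x.2‖ + s*‖y.2‖)^2 + 1/2*(1-(t*x.1+s*y.1)^2)^2 := by
          linarith
      _ ≤ t*(x.1^2*‖x.2‖^2 + 1/2*(1-x.1^2)^2) + s*(y.1^2*‖y.2‖^2 + 1/2*(1-y.1^2)^2) := hkey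
      _ = t*(x.1^2*‖x.2‖^2 + (1/2)*(1-x.1^2)^2) + s*(y.1^2*‖y.2‖^2 + (1/2)*(1-y.1^2)^2) := by ring
end

section
/- For every δ ∈ (0, 1/3) there exists a constant C > 0, depending only on δ, such that for all f ∈ ℝ with √(1/3 + δ) ≤ f ≤ 1, all a ∈ ℝ³ with |a|² ≤ f² - 1/3 - δ, and all g ∈ ℝ, b ∈ ℝ³: |f b + 2 g a|² + (3 f² - 3|a|² - 1) g² ≥ C (g² + |b|²). -/
/-!
By Peter–Paul, `‖f b + 2g a‖² ≥ (1 - ε) f² ‖b‖² - (1/ε - 1) 4 g² ‖a‖²`. Taking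
`ε = 16 / (16 + 9δ)` keeps a `9δ / (16 + 9δ)` share of `f² ‖b‖²`, while the loss
`(9δ/4) ‖a‖² g² ≤ (3δ/2) g²` (as `‖a‖² ≤ 2/3`) is absorbed by half of the
margin `3f² - 3‖a‖² - 1 ≥ 3δ`. Both surviving coefficients are at least `3δ / (16 + 9δ)`.
-/

theorem sub_le_norm_add_sq {E : Type*} [NormedAddCommGroup E] [InnerProductSpace ℝ E] (x y : E) {ε : ℝ} (hε : 0 < ε) :
    (1 - ε) * ‖x‖ ^ 2 - (ε⁻¹ - 1) * ‖y‖ ^ 2 ≤ ‖x + y‖ ^ 2 := by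
  have hsq : 0 ≤ ‖ε • x + y‖ ^ 2 := sq_nonneg _
  rw [norm_add_sq_real, norm_smul, real_inner_smul_left, Real.norm_of_nonneg hε.le] at hsq
  rw [norm_add_sq_real, ← sub_nonneg]
  have key : (‖x‖ ^ 2 + 2 * inner ℝ x y + ‖y‖ ^ 2)
      - ((1 - ε) * ‖x‖ ^ 2 - (ε⁻¹ - 1) * ‖y‖ ^ 2)
      = ε⁻¹ * ((ε * ‖x‖) ^ 2 + 2 * (ε * inner ℝ x y) + ‖y‖ ^ 2) := by
    field_simp
    ring
  rw [key]
  positivity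

theorem secondVariation_coercive {E : Type*} [NormedAddCommGroup E] [InnerProductSpace ℝ E]
    {δ f : ℝ} (hδ : 0 < δ) (hf : 1 / 3 + δ ≤ f ^ 2) (hf1 : f ^ 2 ≤ 1)
    {a : E} (ha : ‖a‖ ^ 2 ≤ f ^ 2 - 1 / 3 - δ) (g : ℝ) (b : E) :
    3 * δ / (16 + 9 * δ) * (g ^ 2 + ‖b‖ ^ 2)
      ≤ ‖f • b + (2 * g) • a‖ ^ 2 + (3 * f ^ 2 - 3 * ‖a‖ ^ 2 - 1) * g ^ 2 := by
  have hD : 0 < 16 + 9 * δ := by linarith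
  have hpp := sub_le_norm_add_sq (f • b) ((2 * g) • a)
    (div_pos (by norm_num : (0 : ℝ) < 16) hD)
  have hε₁ : 1 - 16 / (16 + 9 * δ) = 9 * δ / (16 + 9 * δ) := by field_simp; ring
  have hε₂ : (16 / (16 + 9 * δ))⁻¹ - 1 = 9 * δ / 16 := by field_simp; ring
  rw [hε₁, hε₂, norm_smul, norm_smul, mul_pow, mul_pow, Real.norm_eq_abs, Real.norm_eq_abs,
    sq_abs, sq_abs] at hpp
  have hb : 3 * δ / (16 + 9 * δ) ≤ 9 * δ / (16 + 9 * δ) * f ^ 2 := by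
    rw [div_mul_eq_mul_div]
    exact div_le_div_of_nonneg_right (by nlinarith) hD.le
  have hg : 3 * δ / (16 + 9 * δ) ≤ 3 * f ^ 2 - 3 * ‖a‖ ^ 2 - 1 - 9 * δ / 4 * ‖a‖ ^ 2 := by
    calc 3 * δ / (16 + 9 * δ) ≤ 3 * δ / 2 := by gcongr; linarith
      _ ≤ _ := by nlinarith
  nlinarith [mul_le_mul_of_nonneg_right hb (sq_nonneg ‖b‖),
    mul_le_mul_of_nonneg_right hg (sq_nonneg g)]

/-- Uniform coercivity of the second-variation quadratic form on `K_δ¹`. -/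
theorem stmt9 (δ : ℝ) (hδ : δ ∈ Set.Ioo (0:ℝ) (1/3)) :
    ∃ C > 0, ∀ (f : ℝ) (a : EuclideanSpace ℝ (Fin 3)) (g : ℝ)
      (b : EuclideanSpace ℝ (Fin 3)),
      Real.sqrt (1/3 + δ) ≤ f → f ≤ 1 → ‖a‖^2 ≤ f^2 - 1/3 - δ →
      C * (g^2 + ‖b‖^2) ≤ ‖f • b + (2*g) • a‖^2 + (3*f^2 - 3*‖a‖^2 - 1) * g^2 := by
  have hδ₀ : 0 < δ := hδ.1
  refine ⟨3 * δ / (16 + 9 * δ), by positivity, fun f a g b hf hf1 ha => ?_⟩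
  obtain ⟨hf₀, hf₂⟩ := Real.sqrt_le_iff.mp hf
  exact secondVariation_coercive hδ₀ hf₂ (pow_le_one₀ hf₀ hf1) ha g b
end

section
/- For every δ ∈ (0, 1/3) there exists a constant C > 0, depending only on δ, such that for all (f₀, a₀), (f₁, a₁) ∈ ℝ × ℝ³ with 0 < f_i ≤ 1 and f_i² - |a_i|² - 1/3 ≥ δ (i = 0, 1), setting g = f₁ - f₀ and b = a₁ - a₀, the following inequality holds: [2(f₁² + |a₁|² - 1)f₁ - 2(f₀² + |a₀|² - 1)f₀] g + (2 f₁² a₁ - 2 f₀² a₀) · b ≥ C (g² + |b|²). -/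
/-!
Along the segment `x(τ) = (1 - τ) x₀ + τ x₁`, the derivative of `τ ↦ ⟨∇G(x(τ)), x₁ - x₀⟩` is the
second variation `Q_{x(τ)}(x₁ - x₀)`. Since `∇G` is a cubic polynomial, this derivative is quadratic
in `τ`, so Simpson's rule integrates it exactly:
`⟨∇G(x₁) - ∇G(x₀), x₁ - x₀⟩ = (Q_{x₀} + 4 Q_{x_{1/2}} + Q_{x₁})(x₁ - x₀) / 6`.
The three nodes lie in `K_δ¹` (the midpoint by convexity), where `Q ≥ δ/2 · |·|²`.
-/

open scoped RealInnerProductSpace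

variable {E : Type*} [NormedAddCommGroup E] [InnerProductSpace ℝ E]

/-- The second variation of `G(f, a) = f²‖a‖² + ½(1 - f²)²` at `(f, a)` in direction `(g, b)`. -/
def glHessianForm (f : ℝ) (a : E) (g : ℝ) (b : E) : ℝ :=
  2 * (3 * f ^ 2 + ‖a‖ ^ 2 - 1) * g ^ 2 + 8 * f * g * ⟪a, b⟫ + 2 * f ^ 2 * ‖b‖ ^ 2

lemma half_mul_sq_add_sq_le_quadratic {δ f σ g h : ℝ} (hδ : 0 < δ)
    (hK : δ ≤ f ^ 2 - σ ^ 2 - 1 / 3) :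
    δ / 2 * (g ^ 2 + h ^ 2) ≤ 2 * (3 * f ^ 2 + σ ^ 2 - 1) * g ^ 2 + 8 * f * σ * g * h
      + 2 * f ^ 2 * h ^ 2 := by
  have he : 0 ≤ f ^ 2 - σ ^ 2 - 1 / 3 - δ := by linarith
  -- discriminant of the quadratic form minus `δ/2` times the identity
  have hdisc : (8 * f * σ) ^ 2 ≤ 4 * (6 * f ^ 2 + 2 * σ ^ 2 - 2 - δ / 2) * (2 * f ^ 2 - δ / 2) := by
    nlinarith [mul_nonneg hδ.le he, mul_nonneg (sq_nonneg σ) he,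
      sq_nonneg (f ^ 2 - σ ^ 2 - 1 / 3 - δ), mul_nonneg hδ.le (sq_nonneg σ), mul_pos hδ hδ]
  have hlead : 0 < 2 * f ^ 2 - δ / 2 := by nlinarith [sq_nonneg σ]
  nlinarith [sq_nonneg (8 * f * σ * g + (4 * f ^ 2 - δ) * h),
    mul_nonneg (sub_nonneg.2 hdisc) (sq_nonneg g), mul_pos hlead hlead, sq_nonneg g, sq_nonneg h]

lemma glHessianForm_coercive {δ f : ℝ} {a : E} (hδ : 0 < δ) (hK : δ ≤ f ^ 2 - ‖a‖ ^ 2 - 1 / 3)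
    (g : ℝ) (b : E) : δ / 2 * (g ^ 2 + ‖b‖ ^ 2) ≤ glHessianForm f a g b := by
  have hscalar := half_mul_sq_add_sq_le_quadratic (f := |f|) (σ := ‖a‖) (g := |g|) (h := -‖b‖) hδ
    (by rwa [sq_abs])
  have hcross : -(|f| * |g| * (‖a‖ * ‖b‖)) ≤ f * g * ⟪a, b⟫ := by
    refine le_trans (neg_le_neg ?_) (neg_abs_le _)
    rw [abs_mul, abs_mul]
    gcongr
    exact abs_real_inner_le_norm a b
  rw [sq_abs, sq_abs, neg_sq] at hscalar
  unfold glHessianForm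
  nlinarith

lemma le_sq_sub_norm_sq_midpoint {c f₀ f₁ : ℝ} {a₀ a₁ : E} (hc : 0 ≤ c)
    (hf₀ : 0 ≤ f₀) (hf₁ : 0 ≤ f₁) (h₀ : c ≤ f₀ ^ 2 - ‖a₀‖ ^ 2) (h₁ : c ≤ f₁ ^ 2 - ‖a₁‖ ^ 2) :
    c ≤ ((f₀ + f₁) / 2) ^ 2 - ‖(1 / 2 : ℝ) • (a₀ + a₁)‖ ^ 2 := by
  set s := ‖a₀‖
  set t := ‖a₁‖
  -- Cauchy–Schwarz in `ℝ²`: `(c + s t)² ≤ (c + s²)(c + t²) ≤ (f₀ f₁)²`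
  have hprod : c + s * t ≤ f₀ * f₁ := by
    have hsq : (c + s * t) ^ 2 ≤ (f₀ * f₁) ^ 2 := by
      nlinarith [mul_nonneg hc (sq_nonneg (s - t)),
        mul_le_mul (show c + s ^ 2 ≤ f₀ ^ 2 by linarith) (show c + t ^ 2 ≤ f₁ ^ 2 by linarith)
          (by positivity) (sq_nonneg f₀)]
    exact (abs_le_of_sq_le_sq' hsq (by positivity)).2
  have hmid : ‖(1 / 2 : ℝ) • (a₀ + a₁)‖ ^ 2 = (s ^ 2 + t ^ 2 + 2 * ⟪a₀, a₁⟫) / 4 := by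
    rw [norm_smul, mul_pow, norm_add_sq_real]
    norm_num
    ring
  have hinner : ⟪a₀, a₁⟫ ≤ s * t := real_inner_le_norm a₀ a₁
  rw [hmid]
  nlinarith

lemma gradient_pairing_eq_simpson (f₀ f₁ : ℝ) (a₀ a₁ : E) :
    (2 * (f₁ ^ 2 + ‖a₁‖ ^ 2 - 1) * f₁ - 2 * (f₀ ^ 2 + ‖a₀‖ ^ 2 - 1) * f₀) * (f₁ - f₀)
        + ⟪(2 * f₁ ^ 2) • a₁ - (2 * f₀ ^ 2) • a₀, a₁ - a₀⟫ =
      (glHessianForm f₀ a₀ (f₁ - f₀) (a₁ - a₀)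
        + 4 * glHessianForm ((f₀ + f₁) / 2) ((1 / 2 : ℝ) • (a₀ + a₁)) (f₁ - f₀) (a₁ - a₀)
        + glHessianForm f₁ a₁ (f₁ - f₀) (a₁ - a₀)) / 6 := by
  simp only [glHessianForm, ← real_inner_self_eq_norm_sq, inner_add_left, inner_add_right,
    inner_sub_left, inner_sub_right, real_inner_smul_left, real_inner_smul_right,
    real_inner_comm a₀ a₁]
  ring

/-- Remark 4.1(b): strong monotonicity of the gradient of
`G(f,a) = f²|a|² + ½(1-f²)²` on `K_δ¹`. -/
theorem stmt10 (δ : ℝ) (hδ : δ ∈ Set.Ioo (0:ℝ) (1/3)) :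
    ∃ C > 0, ∀ (f₀ f₁ : ℝ) (a₀ a₁ : EuclideanSpace ℝ (Fin 3)),
      0 < f₀ → f₀ ≤ 1 → δ ≤ f₀^2 - ‖a₀‖^2 - 1/3 →
      0 < f₁ → f₁ ≤ 1 → δ ≤ f₁^2 - ‖a₁‖^2 - 1/3 →
      C * ((f₁ - f₀)^2 + ‖a₁ - a₀‖^2) ≤
        (2*(f₁^2 + ‖a₁‖^2 - 1)*f₁ - 2*(f₀^2 + ‖a₀‖^2 - 1)*f₀) * (f₁ - f₀)
          + (inner ℝ ((2*f₁^2) • a₁ - (2*f₀^2) • a₀) (a₁ - a₀) : ℝ) := by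
  obtain ⟨hδ0, -⟩ := hδ
  refine ⟨δ / 2, half_pos hδ0, fun f₀ f₁ a₀ a₁ hf₀ _ hK₀ hf₁ _ hK₁ => ?_⟩
  have hKmid : δ ≤ ((f₀ + f₁) / 2) ^ 2 - ‖(1 / 2 : ℝ) • (a₀ + a₁)‖ ^ 2 - 1 / 3 := by
    have := le_sq_sub_norm_sq_midpoint (c := 1 / 3 + δ) (a₀ := a₀) (a₁ := a₁) (by positivity)
      hf₀.le hf₁.le (by linarith) (by linarith)
    linarith
  rw [gradient_pairing_eq_simpson]
  have q₀ := glHessianForm_coercive hδ0 hK₀ (f₁ - f₀) (a₁ - a₀)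
  have q₁ := glHessianForm_coercive hδ0 hK₁ (f₁ - f₀) (a₁ - a₀)
  have qmid := glHessianForm_coercive hδ0 hKmid (f₁ - f₀) (a₁ - a₀)
  linarith
end
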